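/- For every positive integer n and all integers a, b with 1 ≤ a < b ≤ n, the determinant of the (4b-4a-1)×(4b-4a-1) tridiagonal matrix with diagonal pattern (4/5, 1, 1, 4/5, 4/5, 1, 1, 4/5, ...) repeating with period 4 (starting at index 4a+1 of the matrix 𝓛_A) and corresponding off-diagonal entries from {-1/√5, -1/2, -2/5} equals (2/5)(b-a)(1/25)^{b-a-1}. -/
import Mathlib


open Real

/-- The off-diagonal entry of the normalized-Laplacian matrix `𝓛_A` of `Q_n` between
(1-indexed) positions `g` and `g+1`, for `1 < g < 4n`: it is `-1/2` when `g ≡ 2 (mod 4)`,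
`-2/5` when `g ≡ 0 (mod 4)`, and `-1/√5` when `g ≡ 1, 3 (mod 4)`. -/
noncomputable def offEntry (g : ℕ) : ℝ :=
  if g % 4 = 2 then -(1 / 2) else if g % 4 = 0 then -(2 / 5) else -(1 / Real.sqrt 5)

/-- The `(4b-4a-1) × (4b-4a-1)` principal submatrix `Z_{4a,4b}` of `𝓛_A` formed by its rows
and columns `4a+1, …, 4b-1` (1-indexed): tridiagonal, with diagonal `4/5` at positions
`≡ 0, 1 (mod 4)` and `1` otherwise, and off-diagonal entries `offEntry`. -/
noncomputable def Zmat (a b : ℕ) : Matrix (Fin (4 * b - 4 * a - 1)) (Fin (4 * b - 4 * a - 1)) ℝ :=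
  fun i j =>
    if i = j then
      (if (4 * a + 1 + i.val) % 4 = 0 ∨ (4 * a + 1 + i.val) % 4 = 1 then 4 / 5 else 1)
    else if 4 * a + 1 + i.val + 1 = 4 * a + 1 + j.val then offEntry (4 * a + 1 + i.val)
    else if 4 * a + 1 + j.val + 1 = 4 * a + 1 + i.val then offEntry (4 * a + 1 + j.val)
    else 0


noncomputable def triMat (d u l : ℕ → ℝ) (n : ℕ) : Matrix (Fin n) (Fin n) ℝ :=
  fun i j => if (i : ℕ) = j then d i else if (i : ℕ) + 1 = j then u i
    else if (j : ℕ) + 1 = i then l j else 0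

noncomputable def triDet (d u l : ℕ → ℝ) : ℕ → ℝ
  | 0 => 1
  | 1 => d 0
  | (n+2) => d (n+1) * triDet d u l (n+1) - u n * l n * triDet d u l n

lemma triMat_castSucc (d u l : ℕ → ℝ) (n : ℕ) :
    (triMat d u l (n+1)).submatrix Fin.castSucc Fin.castSucc = triMat d u l n := by
  ext i j
  simp [triMat, Matrix.submatrix_apply]

lemma triMat_det_rec (d u l : ℕ → ℝ) (n : ℕ) :
    (triMat d u l (n+2)).det =
      d (n+1) * (triMat d u l (n+1)).det - u n * l n * (triMat d u l n).det := by
  rw [Matrix.det_succ_row _ (Fin.last (n+1))]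
  rw [Fin.sum_univ_castSucc, Fin.sum_univ_castSucc]
  have hz : ∀ j : Fin n, triMat d u l (n+2) (Fin.last (n+1)) (Fin.castSucc (Fin.castSucc j)) = 0 := by
    intro j
    have hj : (j : ℕ) < n := j.isLt
    simp only [triMat, Fin.val_last, Fin.coe_castSucc]
    rw [if_neg (by omega), if_neg (by omega), if_neg (by omega)]
  rw [Finset.sum_eq_zero (fun j _ => by rw [hz j, mul_zero, zero_mul]), zero_add]
  have e1 : triMat d u l (n+2) (Fin.last (n+1)) (Fin.castSucc (Fin.last n)) = l n := by
    simp only [triMat, Fin.val_last, Fin.coe_castSucc]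
    rw [if_neg (by omega), if_neg (by omega)]
    exact if_pos trivial
  have e2 : triMat d u l (n+2) (Fin.last (n+1)) (Fin.last (n+1)) = d (n+1) := by
    simp [triMat]
  rw [e1, e2]
  -- the minor at the last column
  have m2 : (triMat d u l (n+2)).submatrix (Fin.last (n+1)).succAbove
      (Fin.last (n+1)).succAbove = triMat d u l (n+1) := by
    rw [Fin.succAbove_last, triMat_castSucc]
  rw [m2]
  -- the minor at column n
  set B := (triMat d u l (n+2)).submatrix (Fin.last (n+1)).succAbove
      (Fin.castSucc (Fin.last n)).succAbove with hB
  have detB : B.det = u n * (triMat d u l n).det := by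
    rw [Matrix.det_succ_column B (Fin.last n), Fin.sum_univ_castSucc]
    have hBcol : ∀ i : Fin (n+1), B i (Fin.last n) =
        triMat d u l (n+2) (Fin.castSucc i) (Fin.last (n+1)) := by
      intro i
      rw [hB, Matrix.submatrix_apply, Fin.succAbove_last]
      congr 1
      rw [Fin.succAbove, if_neg (by simp [Fin.lt_iff_val_lt_val])]
      rfl
    have hz2 : ∀ i : Fin n, B (Fin.castSucc i) (Fin.last n) = 0 := by
      intro i
      rw [hBcol]
      have : (i : ℕ) < n := i.isLt
      simp only [triMat, Fin.coe_castSucc, Fin.val_last]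
      rw [if_neg (by omega), if_neg (by omega), if_neg (by omega)]
    rw [Finset.sum_eq_zero (fun i _ => by rw [hz2 i, mul_zero, zero_mul]), zero_add]
    have e3 : B (Fin.last n) (Fin.last n) = u n := by
      rw [hBcol]
      simp only [triMat, Fin.coe_castSucc, Fin.val_last]
      rw [if_neg (by omega)]
      exact if_pos trivial
    have hcs : ∀ j : Fin n, (Fin.castSucc (Fin.last n)).succAbove (Fin.castSucc j) =
        Fin.castSucc (Fin.castSucc j) := by
      intro j
      rw [Fin.succAbove, if_pos]
      simp [Fin.lt_iff_val_lt_val, j.isLt]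
    have m3 : B.submatrix (Fin.last n).succAbove (Fin.last n).succAbove = triMat d u l n := by
      ext i j
      simp only [Matrix.submatrix_apply, Fin.succAbove_last, hB, hcs]
      simp [triMat]
    rw [e3, m3]
    have : ((Fin.last n : ℕ) + (Fin.last n : ℕ)) = 2 * n := by simp [Fin.val_last]; ring
    rw [this]
    have : (-1 : ℝ) ^ (2 * n) = 1 := by
      rw [pow_mul]; norm_num
    rw [this]; ring
  rw [detB]
  have s1 : ((Fin.last (n+1) : ℕ) + (Fin.castSucc (Fin.last n) : ℕ)) = 2 * n + 1 := by
    simp [Fin.val_last]; ring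
  have s2 : ((Fin.last (n+1) : ℕ) + (Fin.last (n+1) : ℕ)) = 2 * (n + 1) := by
    simp [Fin.val_last]; ring
  rw [s1, s2]
  have o1 : (-1 : ℝ) ^ (2 * n + 1) = -1 := by rw [pow_succ, pow_mul]; norm_num
  have o2 : (-1 : ℝ) ^ (2 * (n+1)) = 1 := by rw [pow_mul]; norm_num
  rw [o1, o2]; ring

theorem triMat_det (d u l : ℕ → ℝ) : ∀ n, (triMat d u l n).det = triDet d u l n := by
  intro n
  induction n using Nat.strong_induction_on with
  | _ n ih =>
    match n with
    | 0 => simp [triDet, Matrix.det_fin_zero]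
    | 1 => simp [triMat, triDet, Matrix.det_fin_one]
    | (n+2) => rw [triMat_det_rec, ih (n+1) (by omega), ih n (by omega)]; rfl

lemma triDet_succ_succ (d u l : ℕ → ℝ) (n : ℕ) :
    triDet d u l (n+2) = d (n+1) * triDet d u l (n+1) - u n * l n * triDet d u l n := rfl

noncomputable def dfun (i : ℕ) : ℝ := if (1+i) % 4 = 0 ∨ (1+i) % 4 = 1 then 4/5 else 1
noncomputable def ufun (i : ℕ) : ℝ := offEntry (1+i)

lemma zmat_eq (a b : ℕ) : Zmat a b = triMat dfun ufun ufun (4*b-4*a-1) := by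
  funext i j
  have hoff : ∀ x : ℕ, offEntry (4*a+1+x) = ufun x := fun x => by
    unfold ufun offEntry
    rw [show (4*a+1+x) % 4 = (1+x) % 4 from by omega]
  have hd : (if (4*a+1+(i:ℕ)) % 4 = 0 ∨ (4*a+1+(i:ℕ)) % 4 = 1 then (4:ℝ)/5 else 1)
      = dfun i := by
    unfold dfun
    rw [show (4*a+1+(i:ℕ)) % 4 = (1+(i:ℕ)) % 4 from by omega]
  have h2 : ∀ x y : ℕ, (4*a+1+x+1 = 4*a+1+y) ↔ (x+1 = y) := fun x y => by omega
  simp only [Zmat, triMat, hd, hoff, h2, ← Fin.val_eq_val]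

lemma hsq : (-(1 / Real.sqrt 5)) * (-(1 / Real.sqrt 5)) = 1/5 := by
  rw [neg_mul_neg, div_mul_div_comm, one_mul, Real.mul_self_sqrt (by norm_num)]

lemma ufun_0 (k : ℕ) : ufun (4*k) = -(1 / Real.sqrt 5) := by
  unfold ufun offEntry; rw [show (1+4*k) % 4 = 1 from by omega]; norm_num

lemma ufun_1 (k : ℕ) : ufun (4*k+1) = -(1/2) := by
  unfold ufun offEntry; rw [show (1+(4*k+1)) % 4 = 2 from by omega]; norm_num

lemma ufun_2 (k : ℕ) : ufun (4*k+2) = -(1 / Real.sqrt 5) := by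
  unfold ufun offEntry; rw [show (1+(4*k+2)) % 4 = 3 from by omega]; norm_num

lemma ufun_3 (k : ℕ) : ufun (4*k+3) = -(2/5) := by
  unfold ufun offEntry; rw [show (1+(4*k+3)) % 4 = 0 from by omega]; norm_num

lemma dfun_1 (k : ℕ) : dfun (4*k+1) = 1 := by
  unfold dfun; rw [show (1+(4*k+1)) % 4 = 2 from by omega]; norm_num

lemma dfun_2 (k : ℕ) : dfun (4*k+2) = 1 := by
  unfold dfun; rw [show (1+(4*k+2)) % 4 = 3 from by omega]; norm_num

lemma dfun_3 (k : ℕ) : dfun (4*k+3) = 4/5 := by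
  unfold dfun; rw [show (1+(4*k+3)) % 4 = 0 from by omega]; norm_num

lemma dfun_4 (k : ℕ) : dfun (4*k+4) = 4/5 := by
  unfold dfun; rw [show (1+(4*k+4)) % 4 = 1 from by omega]; norm_num

lemma h25 (k : ℕ) : ((25:ℝ)^k) ≠ 0 := by positivity

lemma T_forms : ∀ k : ℕ, triDet dfun ufun ufun (4*k) = (4*(k:ℝ)+1)/25^k ∧
    triDet dfun ufun ufun (4*k+1) = (8*(k:ℝ)+4)/(5*25^k) := by
  intro k
  induction k with
  | zero =>
    refine ⟨by simp [triDet], ?_⟩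
    show triDet dfun ufun ufun 1 = _
    simp [triDet, dfun]
  | succ k ih =>
    obtain ⟨h0, h1⟩ := ih
    have e2 : triDet dfun ufun ufun (4*k+2) = (4*(k:ℝ)+3)/(5*25^k) := by
      rw [show 4*k+2 = (4*k)+2 from rfl, triDet_succ_succ, h0, h1, dfun_1, ufun_0, hsq]
      field_simp
      ring
    have e3 : triDet dfun ufun ufun (4*k+3) = (2*(k:ℝ)+2)/(5*25^k) := by
      rw [show 4*k+3 = (4*k+1)+2 from rfl, triDet_succ_succ,
        show 4*k+1+1 = 4*k+2 from rfl, e2, h1, dfun_2, ufun_1]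
      field_simp
      ring
    have e4 : triDet dfun ufun ufun (4*k+4) = (4*(k:ℝ)+5)/25^(k+1) := by
      rw [show 4*k+4 = (4*k+2)+2 from rfl, triDet_succ_succ,
        show 4*k+2+1 = 4*k+3 from rfl, e3, e2, dfun_3, ufun_2, hsq]
      rw [pow_succ]
      field_simp
      ring
    have e5 : triDet dfun ufun ufun (4*k+5) = (8*(k:ℝ)+12)/(5*25^(k+1)) := by
      rw [show 4*k+5 = (4*k+3)+2 from rfl, triDet_succ_succ,
        show 4*k+3+1 = 4*k+4 from rfl, e4, e3, dfun_4, ufun_3]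
      rw [pow_succ]
      field_simp
      ring
    constructor
    · rw [show 4*(k+1) = 4*k+4 from by ring, e4]
      push_cast; ring_nf
    · rw [show 4*(k+1)+1 = 4*k+5 from by ring, e5]
      push_cast; ring_nf

lemma T_4k3 (k : ℕ) : triDet dfun ufun ufun (4*k+3) = (2*(k:ℝ)+2)/(5*25^k) := by
  obtain ⟨h0, h1⟩ := T_forms k
  have e2 : triDet dfun ufun ufun (4*k+2) = (4*(k:ℝ)+3)/(5*25^k) := by
    rw [show 4*k+2 = (4*k)+2 from rfl, triDet_succ_succ, h0, h1, dfun_1, ufun_0, hsq]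
    field_simp
    ring
  rw [show 4*k+3 = (4*k+1)+2 from rfl, triDet_succ_succ,
    show 4*k+1+1 = 4*k+2 from rfl, e2, h1, dfun_2, ufun_1]
  field_simp
  ring

/-- Case 1 of the Appendix: `det Z_{4a,4b} = (2/5)(b-a)(1/25)^{b-a-1}` for `1 ≤ a < b ≤ n`. -/
theorem det_Zmat (n a b : ℕ) (hn : 0 < n) (ha : 1 ≤ a) (hab : a < b) (hb : b ≤ n) :
    (Zmat a b).det = 2 / 5 * ((b : ℝ) - a) * (1 / 25) ^ (b - a - 1) := by
  rw [zmat_eq, triMat_det]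
  set c := b - a with hc
  have hc1 : 1 ≤ c := by omega
  rw [show 4*b-4*a-1 = 4*(c-1)+3 from by omega, T_4k3]
  have hcast : ((c-1 : ℕ):ℝ) = (c:ℝ) - 1 := by
    have := Nat.cast_sub hc1 (R := ℝ); simpa using this
  have hba : ((c : ℕ):ℝ) = (b:ℝ) - a := by
    rw [hc]; have := Nat.cast_sub hab.le (R := ℝ); simpa using this
  rw [hcast, ← hba]
  have h0 : ((25:ℝ)^(c-1)) ≠ 0 := by positivity
  rw [div_pow, one_pow]
  field_simp
  ring
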